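/- arXiv:1711.04186 — 2 statements merged into one kernel-verified Lean document; each statement's English description precedes it below -/
import Mathlib

section
/- The vector 𝒜₀ δ_0 is nonzero and satisfies Π₀ (𝒜₀ δ_0) = 𝒜₀ δ_0; in particular the ground state subspace {ψ ∈ 𝓗 : Π₀ ψ = ψ} is nonzero. -/
open scoped BigOperators

noncomputable section

variable {A B C : Type} [AddCommGroup A] [Fintype A] [AddCommGroup B] [Fintype B]
  [DecidableEq B] [AddCommGroup C] [Fintype C]

/-- The shift operator `P_t` on the Hilbert space `𝓗 = B → ℂ`: `(P_t ψ)(g) = ψ(g - t)`. -/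
def shiftOp (t : B) : (B → ℂ) →ₗ[ℂ] (B → ℂ) where
  toFun ψ := fun g => ψ (g - t)
  map_add' _ _ := rfl
  map_smul' _ _ := rfl

/-- The clock operator `Q_m` on `𝓗 = B → ℂ`: `(Q_m ψ)(g) = m(g) ψ(g)`. -/
def clockOp (m : B → ℂ) : (B → ℂ) →ₗ[ℂ] (B → ℂ) where
  toFun ψ := fun g => m g * ψ g
  map_add' ψ φ := by funext g; simp [mul_add]
  map_smul' c ψ := by funext g; simp [smul_eq_mul]; ring

/-- The basis vector `δ_f ∈ 𝓗`. -/
def deltaVec (f : B) : B → ℂ := fun g => if g = f then 1 else 0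

/-- The generalized gauge projector `𝒜_s = (1/|A|) Σ_{a ∈ A} s(a) • P_{u(a)}`. -/
def gaugeOp (u : A →+ B) (s : AddChar A ℂ) : (B → ℂ) →ₗ[ℂ] (B → ℂ) :=
  (Fintype.card A : ℂ)⁻¹ • ∑ a : A, s a • shiftOp (u a)

/-- The holonomy projector `ℬ_c = (1/|C|) Σ_r r(c) • Q_{r ∘ v}`, the sum running over all
additive characters `r : C → ℂ`. -/
def holOp (v : B →+ C) (c : C) : (B → ℂ) →ₗ[ℂ] (B → ℂ) :=
  (Fintype.card C : ℂ)⁻¹ • ∑ r : AddChar C ℂ, r c • clockOp (fun g => r (v g))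

/-- The ground state projector `Π₀ = 𝒜₀ ∘ ℬ₀`. -/
def groundProj (u : A →+ B) (v : B →+ C) : (B → ℂ) →ₗ[ℂ] (B → ℂ) :=
  gaugeOp u 1 ∘ₗ holOp v 0

/-! `𝒜_s` is an `s`-weighted average of the translations `P_{u a}`, so it absorbs a further
translation `P_{u a}` at the cost of the scalar `s(-a)`, hence is idempotent. The vector `𝒜₀ δ₀`
counts the preimages under `u`: it is supported on `u(A)` and nonzero at `0`. By orthogonality of
characters `ℬ_c` multiplies by the indicator of `v⁻¹{-c}`, and `v ∘ u = 0` puts `u(A)` inside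
`ker v`, so `ℬ₀` fixes `𝒜₀ δ₀`. -/

section

omit [Fintype B] [DecidableEq B]

lemma shiftOp_add (s t : B) : shiftOp (s + t) = shiftOp s * shiftOp t := by
  ext ψ g
  simp [shiftOp, sub_add_eq_sub_sub]

lemma gaugeOp_mul_shiftOp (u : A →+ B) (s : AddChar A ℂ) (a : A) :
    gaugeOp u s * shiftOp (u a) = s (-a) • gaugeOp u s := by
  have reindex : ∑ b : A, s b • shiftOp (u (b + a)) = ∑ b : A, s (b - a) • shiftOp (u b) :=
    Fintype.sum_equiv (Equiv.addRight a) _ _ fun b => by simp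
  rw [gaugeOp, smul_mul_assoc, Finset.sum_mul]
  simp_rw [smul_mul_assoc, ← shiftOp_add, ← map_add]
  rw [reindex]
  simp_rw [sub_eq_add_neg, AddChar.map_add_eq_mul, mul_comm _ (s (-a)), mul_smul]
  rw [← Finset.smul_sum, smul_comm]

lemma isIdempotentElem_gaugeOp (u : A →+ B) (s : AddChar A ℂ) :
    IsIdempotentElem (gaugeOp u s) := by
  have hA : (Fintype.card A : ℂ) ≠ 0 := Nat.cast_ne_zero.2 Fintype.card_ne_zero
  calc gaugeOp u s * gaugeOp u s
      = (Fintype.card A : ℂ)⁻¹ • ∑ a : A, s a • (gaugeOp u s * shiftOp (u a)) := by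
        rw [gaugeOp, mul_smul_comm, Finset.mul_sum]
        simp only [mul_smul_comm]
    _ = (Fintype.card A : ℂ)⁻¹ • ∑ _a : A, gaugeOp u s := by
        simp only [gaugeOp_mul_shiftOp, smul_smul, ← AddChar.map_add_eq_mul, add_neg_cancel,
          AddChar.map_zero_eq_one, one_smul]
    _ = gaugeOp u s := by
        rw [Finset.sum_const, Finset.card_univ, ← Nat.cast_smul_eq_nsmul ℂ, smul_smul,
          inv_mul_cancel₀ hA, one_smul]

lemma holOp_eq_indicator (v : B →+ C) (c : C) (ψ : B → ℂ) :
    holOp v c ψ = (v ⁻¹' {-c}).indicator ψ := by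
  classical
  ext g
  have hC : (Fintype.card C : ℂ) ≠ 0 := Nat.cast_ne_zero.2 Fintype.card_ne_zero
  have : holOp v c ψ g = (Fintype.card C : ℂ)⁻¹ * (∑ r : AddChar C ℂ, r (c + v g)) * ψ g := by
    simp [holOp, clockOp, LinearMap.sum_apply, Finset.sum_apply, Finset.sum_mul,
      AddChar.map_add_eq_mul, mul_assoc, Finset.mul_sum]
  rw [this, AddChar.sum_apply_eq_ite, add_eq_zero_iff_eq_neg']
  by_cases h : v g = -c
  · simp [h, hC]
  · simp [h]

lemma shiftOp_deltaVec [DecidableEq B] (t f : B) : shiftOp t (deltaVec f) = deltaVec (f + t) := by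
  ext g
  simp [shiftOp, deltaVec, sub_eq_iff_eq_add]

lemma gaugeOp_deltaVec [DecidableEq B] (u : A →+ B) (s : AddChar A ℂ) (f : B) :
    gaugeOp u s (deltaVec f) = (Fintype.card A : ℂ)⁻¹ • ∑ a : A, s a • deltaVec (f + u a) := by
  simp [gaugeOp, LinearMap.sum_apply, shiftOp_deltaVec]

lemma support_gaugeOp_deltaVec_zero_subset [DecidableEq B] (u : A →+ B) (s : AddChar A ℂ) :
    Function.support (gaugeOp u s (deltaVec 0)) ⊆ Set.range u := by
  intro g hg
  rw [Function.mem_support, gaugeOp_deltaVec, Pi.smul_apply, Finset.sum_apply] at hg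
  obtain ⟨a, -, ha⟩ := Finset.exists_ne_zero_of_sum_ne_zero (right_ne_zero_of_smul hg)
  refine ⟨a, ?_⟩
  by_contra hga
  simp [deltaVec, Ne.symm hga] at ha

lemma gaugeOp_one_deltaVec_ne_zero [DecidableEq B] (u : A →+ B) (f : B) :
    gaugeOp u 1 (deltaVec f) ≠ 0 := by
  intro h
  have hker : ∀ a, u a ≠ 0 := by
    simpa [gaugeOp_deltaVec, deltaVec, Finset.sum_boole] using congr_fun h f
  exact hker 0 (map_zero u)

end

/-- `𝒜₀ δ_0` is a nonzero ground state; in particular the ground state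
subspace `{ψ : Π₀ ψ = ψ}` is nonzero. -/
theorem ground_state_subspace_nonzero (u : A →+ B) (v : B →+ C) (hvu : v.comp u = 0) :
    gaugeOp u 1 (deltaVec (0 : B)) ≠ 0 ∧
    groundProj u v (gaugeOp u 1 (deltaVec (0 : B))) = gaugeOp u 1 (deltaVec (0 : B)) ∧
    ∃ ψ : B → ℂ, ψ ≠ 0 ∧ groundProj u v ψ = ψ := by
  set ψ := gaugeOp u 1 (deltaVec (0 : B))
  have hne : ψ ≠ 0 := gaugeOp_one_deltaVec_ne_zero u 0
  have hhol : holOp v 0 ψ = ψ := by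
    rw [holOp_eq_indicator, Set.indicator_eq_self]
    refine (support_gaugeOp_deltaVec_zero_subset u 1).trans ?_
    exact Set.range_subset_iff.2 fun a => by simpa using DFunLike.congr_fun hvu a
  have hfix : groundProj u v ψ = ψ := by
    rw [groundProj, LinearMap.comp_apply, hhol, ← Module.End.mul_apply,
      (isIdempotentElem_gaugeOp u 1).eq]
  exact ⟨hne, hfix, ψ, hne, hfix⟩
end
end

section
/- The dimension over ℂ of the range of Π₀ (the ground state degeneracy) equals the cardinality of the quotient group ker(v) / u(A), where u(A) ⊆ ker(v) since v ∘ u = 0. In the abelian higher gauge theory setting, with A = hom(C,G)^{-1}, B = hom(C,G)^0, C = hom(C,G)^1 and u = δ^{-1}, v = δ^0, this says GSD = |H⁰(C,G)|. -/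
/-!
Character orthogonality turns `ℬ₀` into multiplication by the indicator of `ker v`, and `𝒜₀`
averages over the translates by `u(A) ⊆ ker v`. Hence `Π₀ ψ` is supported on `ker v` and
`u(A)`-invariant, and `Π₀` fixes every such function: the range of `Π₀` is the space of functions
on `ker v ⧸ u(A)`, extended by zero to `B`.
-/

open scoped BigOperators

noncomputable section

variable {A B C : Type} [AddCommGroup A] [Fintype A] [AddCommGroup B] [Fintype B]
  [DecidableEq B] [AddCommGroup C] [Fintype C]

omit [Fintype B] [DecidableEq B] in
theorem holOp_apply [DecidableEq C] (v : B →+ C) (c : C) (ψ : B → ℂ) (g : B) :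
    holOp v c ψ g = if c + v g = 0 then ψ g else 0 := by
  have hC : (Fintype.card C : ℂ) ≠ 0 := Nat.cast_ne_zero.mpr Fintype.card_ne_zero
  have hsum : holOp v c ψ g =
      (Fintype.card C : ℂ)⁻¹ * ((∑ r : AddChar C ℂ, r (c + v g)) * ψ g) := by
    simp [holOp, clockOp, Finset.sum_apply, Finset.sum_mul, AddChar.map_add_eq_mul, mul_assoc]
  rw [hsum, AddChar.sum_apply_eq_ite]
  split_ifs <;> simp [hC]

omit [Fintype B] [DecidableEq B] in
theorem gaugeOp_apply (u : A →+ B) (s : AddChar A ℂ) (ψ : B → ℂ) (g : B) :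
    gaugeOp u s ψ g = (Fintype.card A : ℂ)⁻¹ * ∑ a : A, s a * ψ (g - u a) := by
  simp [gaugeOp, shiftOp, Finset.sum_apply]

omit [Fintype B] [DecidableEq B] in
theorem groundProj_apply [DecidableEq C] (u : A →+ B) (v : B →+ C) (hvu : v.comp u = 0)
    (ψ : B → ℂ) (g : B) :
    groundProj u v ψ g = if v g = 0 then (Fintype.card A : ℂ)⁻¹ * ∑ a : A, ψ (g - u a) else 0 := by
  have hvu' (a : A) : v (u a) = 0 := DFunLike.congr_fun hvu a
  simp only [groundProj, LinearMap.comp_apply, gaugeOp_apply, holOp_apply, AddChar.one_apply,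
    one_mul, zero_add, map_sub, hvu', sub_zero]
  split_ifs <;> simp

omit [Fintype B] [DecidableEq B] in
theorem groundProj_apply_add (u : A →+ B) (v : B →+ C) (hvu : v.comp u = 0) (ψ : B → ℂ)
    (g : B) (a : A) : groundProj u v ψ (g + u a) = groundProj u v ψ g := by
  classical
  have hvu' : v (u a) = 0 := DFunLike.congr_fun hvu a
  rw [groundProj_apply u v hvu, groundProj_apply u v hvu, map_add, hvu', add_zero,
    ← Equiv.sum_comp (Equiv.addRight a)]
  simp only [Equiv.coe_addRight, map_add, add_sub_add_right_eq_sub]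

omit [Fintype B] [DecidableEq B] in
theorem groundProj_eq_self (u : A →+ B) (v : B →+ C) (hvu : v.comp u = 0) {ψ : B → ℂ}
    (hsupp : ∀ g, v g ≠ 0 → ψ g = 0) (hinv : ∀ g a, ψ (g + u a) = ψ g) :
    groundProj u v ψ = ψ := by
  classical
  have hA : (Fintype.card A : ℂ) ≠ 0 := Nat.cast_ne_zero.mpr Fintype.card_ne_zero
  funext g
  rw [groundProj_apply u v hvu]
  split_ifs with hg
  · have hsub (a : A) : ψ (g - u a) = ψ g := by rw [sub_eq_add_neg, ← map_neg, hinv]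
    simp [hsub, hA]
  · exact (hsupp g hg).symm

section extendFromQuotient

variable (R : Type*) [Semiring R] {G : Type*} [AddGroup G] (K H : AddSubgroup G)

def extendFromQuotient : (K ⧸ H.addSubgroupOf K → R) →ₗ[R] (G → R) :=
  Function.ExtendByZero.linearMap R Subtype.val ∘ₗ LinearMap.funLeft R R QuotientAddGroup.mk

variable {R K H}

theorem extendFromQuotient_apply_coe (φ : K ⧸ H.addSubgroupOf K → R) (k : K) :
    extendFromQuotient R K H φ k = φ k :=
  Subtype.val_injective.extend_apply _ _ k

theorem extendFromQuotient_apply_of_notMem (φ : K ⧸ H.addSubgroupOf K → R) {g : G}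
    (hg : g ∉ K) : extendFromQuotient R K H φ g = 0 :=
  Function.extend_apply' _ _ g fun ⟨k, hk⟩ => hg (hk ▸ k.2)

variable (R K H) in
theorem extendFromQuotient_injective : Function.Injective (extendFromQuotient R K H) := by
  intro φ ψ h
  funext q
  obtain ⟨k, rfl⟩ := QuotientAddGroup.mk_surjective q
  simpa only [extendFromQuotient_apply_coe] using congr_fun h k

theorem extendFromQuotient_apply_add (hHK : H ≤ K) (φ : K ⧸ H.addSubgroupOf K → R) (g : G)
    {h : G} (hh : h ∈ H) : extendFromQuotient R K H φ (g + h) = extendFromQuotient R K H φ g := by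
  by_cases hg : g ∈ K
  · have hgh : g + h ∈ K := K.add_mem hg (hHK hh)
    have hmk : (QuotientAddGroup.mk ⟨g + h, hgh⟩ : K ⧸ H.addSubgroupOf K) =
        QuotientAddGroup.mk (⟨g, hg⟩ : K) := by
      rw [QuotientAddGroup.eq, AddSubgroup.mem_addSubgroupOf]
      simpa using H.neg_mem hh
    rw [extendFromQuotient_apply_coe (k := ⟨g + h, hgh⟩),
      extendFromQuotient_apply_coe (k := ⟨g, hg⟩), hmk]
  · rw [extendFromQuotient_apply_of_notMem φ hg,
      extendFromQuotient_apply_of_notMem φ fun hgh => hg (by simpa using K.sub_mem hgh (hHK hh))]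

theorem mem_range_extendFromQuotient {ψ : G → R} (hsupp : ∀ g ∉ K, ψ g = 0)
    (hinv : ∀ g ∈ K, ∀ h ∈ H, ψ (g + h) = ψ g) :
    ψ ∈ LinearMap.range (extendFromQuotient R K H) := by
  refine ⟨fun q => ψ q.out, funext fun g => ?_⟩
  by_cases hg : g ∈ K
  · obtain ⟨h, hh⟩ := QuotientAddGroup.mk_out_eq_add (H.addSubgroupOf K) ⟨g, hg⟩
    rw [extendFromQuotient_apply_coe (k := ⟨g, hg⟩)]
    simp only [hh, AddSubgroup.coe_add]
    exact hinv g hg h h.2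
  · rw [extendFromQuotient_apply_of_notMem _ hg, hsupp g hg]

end extendFromQuotient

omit [Fintype B] [DecidableEq B] in
theorem range_groundProj (u : A →+ B) (v : B →+ C) (hvu : v.comp u = 0) :
    LinearMap.range (groundProj u v) = LinearMap.range (extendFromQuotient ℂ v.ker u.range) := by
  classical
  have hle : u.range ≤ v.ker := (AddMonoidHom.range_le_ker_iff u v).mpr hvu
  apply le_antisymm
  · rintro _ ⟨ψ, rfl⟩
    refine mem_range_extendFromQuotient (fun g hg => ?_) ?_
    · rw [groundProj_apply u v hvu]
      exact if_neg hg
    · rintro g - _ ⟨a, rfl⟩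
      exact groundProj_apply_add u v hvu ψ g a
  · rintro _ ⟨φ, rfl⟩
    exact ⟨_, groundProj_eq_self u v hvu (fun g hg => extendFromQuotient_apply_of_notMem φ hg)
      fun g a => extendFromQuotient_apply_add hle φ g ⟨a, rfl⟩⟩

/-- the ground state degeneracy, i.e. the dimension of the range of `Π₀`,
equals `|ker v / im u| = |H⁰(C,G)|`. -/
theorem ground_state_degeneracy (u : A →+ B) (v : B →+ C) (hvu : v.comp u = 0) :
    Module.finrank ℂ ↥(LinearMap.range (groundProj u v)) =
      Nat.card (↥v.ker ⧸ (u.range.addSubgroupOf v.ker)) := by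
  have : Fintype (↥v.ker ⧸ (u.range.addSubgroupOf v.ker)) := Fintype.ofFinite _
  rw [range_groundProj u v hvu,
    LinearMap.finrank_range_of_inj (extendFromQuotient_injective ℂ _ _), Module.finrank_pi,
    Nat.card_eq_fintype_card]
end
end
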